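/- arXiv:1703.04994 — 5 statements merged into one kernel-verified Lean document; each statement's English description precedes it below -/
import Mathlib

section
/- (Brunk–Prohorov theorem, dimension one.) Let q ≥ 1 be an integer and let {ξ_k : k ≥ 1} be independent random variables with E ξ_k = 0 and E ξ_k^{2q} < ∞ for all k. If Σ_{k=1}^∞ E ξ_k^{2q} / k^{q+1} < ∞, then ζ_n / n → 0 almost surely as n → ∞, where ζ_n = ξ_1 + ⋯ + ξ_n. -/
/-
Write `ζ_n = ξ_0 + ⋯ + ξ_{n-1}` and `b_k = E ξ_k^{2q}`. Expanding `(ζ_n + ξ_n)^{2q}`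
binomially, independence factorises every term, centring kills the term linear in `ξ_n`, and
Lyapunov's inequality bounds the rest; by induction `‖ζ_n‖_{2q}^2 ≤ 4^q Σ_{k<n} ‖ξ_k‖_{2q}^2`,
whence `E ζ_n^{2q} ≤ C n^{q-1} Σ_{k<n} b_k`. Since `ζ_n^{2q}` is a submartingale for the filtration
`σ(ξ_k : k < n)`, Doob's maximal inequality gives
`P(max_{k ≤ 2^{m+1}} |ζ_k| ≥ ε 2^m) ≤ C' 2^{-m(q+1)} Σ_{k<2^{m+1}} b_k`, and exchanging the order of
summation shows that these bounds are summable in `m` because `Σ_k b_k/(k+1)^{q+1} < ∞`.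
By Borel–Cantelli, almost surely `max_{k ≤ 2^{m+1}} |ζ_k| < ε 2^m` for all large `m`, which bounds
`|ζ_n|/n` by `ε` for `2^m ≤ n < 2^{m+1}`.
-/

open MeasureTheory ProbabilityTheory Finset Filter

lemma Even.pow_add_mul_le_add_pow {n : ℕ} (hn : Even n) (x t : ℝ) :
    x ^ n + n * x ^ (n - 1) * t ≤ (x + t) ^ n := by
  rcases n.eq_zero_or_pos with rfl | hn0
  · simp
  rcases eq_or_ne x 0 with rfl | hx
  · have : n - 1 ≠ 0 := by obtain ⟨k, rfl⟩ := hn; omega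
    simpa [zero_pow hn0.ne', zero_pow this] using hn.pow_nonneg t
  have hbern : 1 + n * (t / x) ≤ (1 + t / x) ^ n := by
    rcases le_or_gt (-2) (t / x) with h | h
    · exact one_add_mul_le_pow h n
    · have : (1 : ℝ) ≤ n := by exact_mod_cast hn0
      nlinarith [hn.pow_nonneg (1 + t / x)]
  calc x ^ n + n * x ^ (n - 1) * t = x ^ n * (1 + n * (t / x)) := by
        obtain ⟨m, rfl⟩ : ∃ m, n = m + 1 := ⟨n - 1, by omega⟩
        simp only [add_tsub_cancel_right, pow_succ]
        field_simp
    _ ≤ x ^ n * (1 + t / x) ^ n := mul_le_mul_of_nonneg_left hbern (hn.pow_nonneg x)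
    _ = (x + t) ^ n := by rw [← mul_pow]; congr 1; field_simp

lemma sum_choose_mul_pow_le (r : ℕ) {x y : ℝ} (hx : 0 ≤ x) (hy : 0 ≤ y) :
    ∑ j ∈ range (2 * r + 1), ((2 * r + 2).choose j : ℝ) * (x ^ j * y ^ (2 * r + 2 - j))
      ≤ 4 ^ (r + 1) * y ^ 2 * (x ^ 2 + y ^ 2) ^ r := by
  set M := √(x ^ 2 + y ^ 2)
  have hxM : x ≤ M := Real.le_sqrt_of_sq_le (by nlinarith)
  have hyM : y ≤ M := Real.le_sqrt_of_sq_le (by nlinarith)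
  have hterm : ∀ j ∈ range (2 * r + 1),
      x ^ j * y ^ (2 * r + 2 - j) ≤ y ^ 2 * (x ^ 2 + y ^ 2) ^ r := by
    intro j hj
    have hj : j ≤ 2 * r := Nat.lt_succ_iff.mp (mem_range.mp hj)
    calc x ^ j * y ^ (2 * r + 2 - j) = y ^ 2 * (x ^ j * y ^ (2 * r - j)) := by
          rw [show 2 * r + 2 - j = 2 + (2 * r - j) by omega, pow_add]; ring
      _ ≤ y ^ 2 * (M ^ j * M ^ (2 * r - j)) := by gcongr
      _ = y ^ 2 * (x ^ 2 + y ^ 2) ^ r := by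
          rw [← pow_add, Nat.add_sub_cancel' hj, pow_mul, Real.sq_sqrt (by positivity)]
  have hchoose : ∑ j ∈ range (2 * r + 1), ((2 * r + 2).choose j : ℝ) ≤ 4 ^ (r + 1) := by
    calc ∑ j ∈ range (2 * r + 1), ((2 * r + 2).choose j : ℝ)
        ≤ ∑ j ∈ range (2 * r + 2 + 1), ((2 * r + 2).choose j : ℝ) :=
          sum_le_sum_of_subset_of_nonneg (range_mono (by omega)) fun _ _ _ => by positivity
      _ = 4 ^ (r + 1) := by
          rw [← Nat.cast_sum, Nat.sum_range_choose]
          push_cast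
          rw [← mul_add_one, pow_mul]
          norm_num
  calc _ ≤ ∑ j ∈ range (2 * r + 1), ((2 * r + 2).choose j : ℝ) * (y ^ 2 * (x ^ 2 + y ^ 2) ^ r) :=
        sum_le_sum fun j hj => mul_le_mul_of_nonneg_left (hterm j hj) (by positivity)
    _ ≤ _ := by rw [← sum_mul, mul_assoc]; gcongr

lemma pow_add_mul_sq_le {q : ℕ} (hq : q ≠ 0) {K x y D : ℝ} (hK : 1 ≤ K) (hD : 0 ≤ D)
    (hxD : x ^ 2 ≤ K * D) :
    x ^ (2 * q) + K * y ^ 2 * (x ^ 2 + y ^ 2) ^ (q - 1) ≤ K ^ q * (D + y ^ 2) ^ q := by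
  obtain ⟨r, rfl⟩ : ∃ r, q = r + 1 := ⟨q - 1, by omega⟩
  have hy : 0 ≤ y ^ 2 := sq_nonneg y
  have h1 : x ^ (2 * (r + 1)) ≤ K ^ (r + 1) * D ^ (r + 1) := by
    rw [pow_mul, ← mul_pow]; exact pow_le_pow_left₀ (sq_nonneg x) hxD _
  have h2 : (x ^ 2 + y ^ 2) ^ r ≤ K ^ r * (D + y ^ 2) ^ r := by
    rw [← mul_pow]; exact pow_le_pow_left₀ (by positivity) (by nlinarith) _
  have h3 : D ^ (r + 1) ≤ D * (D + y ^ 2) ^ r := by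
    rw [pow_succ']; exact mul_le_mul_of_nonneg_left (pow_le_pow_left₀ hD (by linarith) _) hD
  calc x ^ (2 * (r + 1)) + K * y ^ 2 * (x ^ 2 + y ^ 2) ^ (r + 1 - 1)
      ≤ K ^ (r + 1) * (D * (D + y ^ 2) ^ r) + K * y ^ 2 * (K ^ r * (D + y ^ 2) ^ r) := by
        rw [Nat.add_sub_cancel]
        have hK0 : 0 ≤ K := by linarith
        exact add_le_add (h1.trans (mul_le_mul_of_nonneg_left h3 (by positivity)))
          (mul_le_mul_of_nonneg_left h2 (by positivity))
    _ = K ^ (r + 1) * (D + y ^ 2) ^ (r + 1) := by ring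

lemma summable_ite_pow {r : ℝ} (hr0 : 0 ≤ r) (hr1 : r < 1) (P : ℕ → Prop) [DecidablePred P] :
    Summable fun m => if P m then r ^ m else 0 :=
  (summable_geometric_of_lt_one hr0 hr1).of_nonneg_of_le (fun m => by split_ifs <;> positivity)
    (fun m => by split_ifs <;> first | exact le_rfl | positivity)

lemma tsum_ite_lt_two_pow_le {p : ℕ} (hp : p ≠ 0) (k : ℕ) :
    ∑' m, (if k < 2 ^ (m + 1) then ((2 : ℝ) ^ p)⁻¹ ^ m else 0)
      ≤ 2 ^ (p + 1) / ((k : ℝ) + 1) ^ p := by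
  set r : ℝ := ((2 : ℝ) ^ p)⁻¹
  set L := Nat.log 2 k
  have hr : r ≤ 2⁻¹ := inv_anti₀ (by norm_num) (le_self_pow₀ (by norm_num) hp)
  have hr0 : 0 ≤ r := by positivity
  have hiff : ∀ m, k < 2 ^ (m + 1) ↔ L ≤ m := fun m => by
    rcases eq_or_ne k 0 with rfl | hk
    · simp [L]
    · rw [← Nat.log_lt_iff_lt_pow (by norm_num) hk, Nat.lt_succ_iff]
  have htail : ∑' m, (if k < 2 ^ (m + 1) then r ^ m else 0) = r ^ L * (1 - r)⁻¹ := by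
    rw [← (summable_ite_pow hr0 (by linarith) _).sum_add_tsum_nat_add L,
      sum_eq_zero fun m hm => if_neg (by rw [hiff]; simpa using hm), zero_add]
    simp_rw [if_pos ((hiff _).2 (Nat.le_add_left _ _)), pow_add, tsum_mul_right,
      tsum_geometric_of_lt_one hr0 (by linarith)]
    ring
  have hk : ((k : ℝ) + 1) ≤ 2 ^ (L + 1) := by
    exact_mod_cast Nat.lt_pow_succ_log_self (by norm_num) k
  have hrL : r ^ L = 2 ^ p / ((2 : ℝ) ^ (L + 1)) ^ p := by
    rw [← pow_mul, add_mul, one_mul, pow_add, pow_mul]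
    simp only [r, inv_pow]
    field_simp
    rw [← pow_mul, ← pow_mul, mul_comm]
  rw [htail, hrL]
  calc 2 ^ p / ((2 : ℝ) ^ (L + 1)) ^ p * (1 - r)⁻¹ ≤ 2 ^ p / ((k : ℝ) + 1) ^ p * 2 := by
        gcongr
        · exact inv_nonneg.2 (by linarith)
        · rw [inv_le_comm₀ (by linarith) (by norm_num)]; linarith
    _ = 2 ^ (p + 1) / ((k : ℝ) + 1) ^ p := by ring

lemma summable_geometric_mul_sum_range_two_pow {b : ℕ → ℝ} (hb : ∀ k, 0 ≤ b k) {p : ℕ}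
    (hp : p ≠ 0) (hsum : Summable fun k => b k / ((k : ℝ) + 1) ^ p) :
    Summable fun m => ((2 : ℝ) ^ p)⁻¹ ^ m * ∑ k ∈ range (2 ^ (m + 1)), b k := by
  set g : ℕ × ℕ → ℝ :=
    fun km => (if km.1 < 2 ^ (km.2 + 1) then ((2 : ℝ) ^ p)⁻¹ ^ km.2 else 0) * b km.1
  have hg0 : 0 ≤ g := fun km => mul_nonneg (by positivity) (hb _)
  have hr : ((2 : ℝ) ^ p)⁻¹ < 1 := inv_lt_one_of_one_lt₀ (one_lt_pow₀ (by norm_num) hp)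
  have hg : Summable g := by
    refine (summable_prod_of_nonneg hg0).2 ⟨fun k => by
      simpa only [g] using (summable_ite_pow (by positivity) hr _).mul_right (b k),
      (hsum.mul_left (2 ^ (p + 1))).of_nonneg_of_le (fun k => tsum_nonneg fun m => hg0 _)
      fun k => ?_⟩
    simp only [g, tsum_mul_right]
    calc _ ≤ 2 ^ (p + 1) / ((k : ℝ) + 1) ^ p * b k :=
          mul_le_mul_of_nonneg_right (tsum_ite_lt_two_pow_le hp k) (hb k)
      _ = _ := by ring
  refine hg.prod_symm.prod.congr fun m => ?_
  rw [tsum_eq_sum (s := range (2 ^ (m + 1))) fun k hk => by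
    simp [g, not_lt.1 (mt mem_range.2 hk)], mul_sum]
  refine sum_congr rfl fun k hk => ?_
  simp [g, mem_range.1 hk]

lemma two_pow_succ_pow_eq (q m : ℕ) (hq : q ≠ 0) :
    ((2 : ℝ) ^ (m + 1)) ^ (q - 1)
      = 2 ^ (q - 1) * ((2 : ℝ) ^ (q + 1))⁻¹ ^ m * ((2 : ℝ) ^ m) ^ (2 * q) := by
  obtain ⟨r, rfl⟩ : ∃ r, q = r + 1 := ⟨q - 1, by omega⟩
  simp only [Nat.add_sub_cancel, inv_pow, ← pow_mul]
  field_simp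
  rw [← pow_add, ← pow_add]
  ring_nf

lemma tendsto_div_of_eventually_dyadic {s : ℕ → ℝ}
    (h : ∀ j : ℕ, ∀ᶠ m in atTop, ∀ k ≤ 2 ^ (m + 1), |s k| < 2 ^ m / (j + 1)) :
    Tendsto (fun n => s n / n) atTop (nhds 0) := by
  rw [Metric.tendsto_atTop]
  intro ε hε
  obtain ⟨j, hj⟩ := exists_nat_one_div_lt hε
  obtain ⟨M, hM⟩ := eventually_atTop.1 (h j)
  refine ⟨2 ^ M, fun n hn => ?_⟩
  have hn0 : 0 < n := lt_of_lt_of_le (Nat.two_pow_pos M) hn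
  have hlog : 2 ^ Nat.log 2 n ≤ n := Nat.pow_log_le_self 2 hn0.ne'
  have hsn := hM _ (Nat.le_log_of_pow_le (by norm_num) hn) n
    (Nat.lt_pow_succ_log_self (by norm_num) n).le
  have hn0' : (0 : ℝ) < n := by exact_mod_cast hn0
  rw [Real.dist_eq, sub_zero, abs_div, Nat.abs_cast, div_lt_iff₀ hn0']
  calc |s n| < 2 ^ Nat.log 2 n / (j + 1) := hsn
    _ ≤ n * (1 / (j + 1)) := by
        rw [mul_one_div]; gcongr; exact_mod_cast hlog
    _ < ε * n := by rw [mul_comm]; gcongr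

namespace MeasureTheory

variable {Ω : Type*} [MeasurableSpace Ω] {μ : Measure Ω}

lemma memLp_of_integrable_pow {X : Ω → ℝ} (hX : AEStronglyMeasurable X μ) {n : ℕ} (hn : Even n)
    (hn0 : n ≠ 0) (hint : Integrable (fun ω => X ω ^ n) μ) : MemLp X n μ := by
  refine (integrable_norm_rpow_iff hX (by simp [hn0]) (by simp)).1 ?_
  simpa [Real.rpow_natCast, hn.pow_abs] using hint

lemma MemLp.integrable_pow_of_le [IsFiniteMeasure μ] {X : Ω → ℝ} {p j : ℕ}
    (hX : MemLp X p μ) (hj : j ≤ p) : Integrable (fun ω => X ω ^ j) μ := by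
  refine (integrable_norm_iff (hX.1.pow j)).1 ?_
  simpa [norm_pow] using (hX.mono_exponent (by exact_mod_cast hj)).integrable_norm_pow'

lemma MemLp.integral_abs_pow_eq_lpNorm_pow {X : Ω → ℝ} {p : ℕ} (hX : MemLp X p μ) (hp : p ≠ 0) :
    ∫ ω, |X ω| ^ p ∂μ = lpNorm X p μ ^ p := by
  rw [lpNorm_eq_integral_norm_rpow_toReal (by simp [hp]) (by simp) hX.1]
  simp only [ENNReal.toReal_natCast, Real.rpow_natCast, Real.norm_eq_abs]
  rw [Real.rpow_inv_natCast_pow (integral_nonneg fun _ => by positivity) hp]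

lemma MemLp.integral_even_pow_eq_lpNorm_pow {X : Ω → ℝ} {p : ℕ} (hX : MemLp X p μ) (hp : Even p)
    (hp0 : p ≠ 0) : ∫ ω, X ω ^ p ∂μ = lpNorm X p μ ^ p := by
  simpa only [hp.pow_abs] using hX.integral_abs_pow_eq_lpNorm_pow hp0

variable [IsProbabilityMeasure μ]

lemma MemLp.integral_abs_pow_le {X : Ω → ℝ} {p j : ℕ}
    (hX : MemLp X p μ) (hj : j ≤ p) : ∫ ω, |X ω| ^ j ∂μ ≤ lpNorm X p μ ^ j := by
  rcases j.eq_zero_or_pos with rfl | hj0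
  · simp
  have hXj : MemLp X j μ := hX.mono_exponent (by exact_mod_cast hj)
  rw [MemLp.integral_abs_pow_eq_lpNorm_pow hXj hj0.ne']
  refine pow_le_pow_left₀ lpNorm_nonneg ?_ j
  rw [← toReal_eLpNorm hX.1, ← toReal_eLpNorm hXj.1]
  exact ENNReal.toReal_mono hX.eLpNorm_ne_top
    (eLpNorm_le_eLpNorm_of_exponent_le (by exact_mod_cast hj) hX.1)

lemma MemLp.abs_integral_pow_le {X : Ω → ℝ} {p j : ℕ} (hX : MemLp X p μ) (hj : j ≤ p) :
    |∫ ω, X ω ^ j ∂μ| ≤ lpNorm X p μ ^ j :=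
  (abs_integral_le_integral_abs).trans (by simpa only [abs_pow] using hX.integral_abs_pow_le hj)

end MeasureTheory

section Moments

variable {Ω : Type*} [MeasurableSpace Ω] {μ : Measure Ω} [IsProbabilityMeasure μ]

lemma integral_add_pow_eq_sum {S X : Ω → ℝ} (hSX : IndepFun S X μ) {n : ℕ}
    (hS : MemLp S n μ) (hX : MemLp X n μ) :
    ∫ ω, (S ω + X ω) ^ n ∂μ
      = ∑ j ∈ range (n + 1), (n.choose j : ℝ) * ((∫ ω, S ω ^ j ∂μ) * ∫ ω, X ω ^ (n - j) ∂μ) := by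
  have hindep : ∀ i j : ℕ, IndepFun (fun ω => S ω ^ i) (fun ω => X ω ^ j) μ := fun i j =>
    hSX.comp (measurable_id.pow_const i) (measurable_id.pow_const j)
  have hint : ∀ j ∈ range (n + 1), Integrable (fun ω => S ω ^ j * X ω ^ (n - j)) μ := by
    intro j hj
    exact (hindep _ _).integrable_mul
      (hS.integrable_pow_of_le (by simpa [Nat.lt_succ_iff] using hj))
      (hX.integrable_pow_of_le (Nat.sub_le n j))
  simp_rw [add_pow]
  rw [integral_finsetSum _ fun j hj => (hint j hj).mul_const _]
  refine sum_congr rfl fun j hj => ?_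
  rw [integral_mul_const, mul_comm, ← (hindep j (n - j)).integral_mul_eq_mul_integral
    (hS.1.pow j) (hX.1.pow _)]
  rfl

lemma integral_add_pow_le {S X : Ω → ℝ} (hSX : IndepFun S X μ) {q : ℕ} (hq : q ≠ 0)
    (hS : MemLp S (2 * q : ℕ) μ) (hX : MemLp X (2 * q : ℕ) μ) (hXc : ∫ ω, X ω ∂μ = 0) :
    ∫ ω, (S ω + X ω) ^ (2 * q) ∂μ ≤ lpNorm S (2 * q : ℕ) μ ^ (2 * q)
      + 4 ^ q * lpNorm X (2 * q : ℕ) μ ^ 2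
        * (lpNorm S (2 * q : ℕ) μ ^ 2 + lpNorm X (2 * q : ℕ) μ ^ 2) ^ (q - 1) := by
  obtain ⟨r, rfl⟩ : ∃ r, q = r + 1 := ⟨q - 1, by omega⟩
  set x := lpNorm S (2 * (r + 1) : ℕ) μ
  set y := lpNorm X (2 * (r + 1) : ℕ) μ
  have hSpow : ∫ ω, S ω ^ (2 * (r + 1)) ∂μ = x ^ (2 * (r + 1)) :=
    hS.integral_even_pow_eq_lpNorm_pow (even_two_mul _) (by omega)
  have hterm : ∀ j ∈ range (2 * r + 1), ((2 * r + 2).choose j : ℝ)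
      * ((∫ ω, S ω ^ j ∂μ) * ∫ ω, X ω ^ (2 * r + 2 - j) ∂μ)
      ≤ ((2 * r + 2).choose j : ℝ) * (x ^ j * y ^ (2 * r + 2 - j)) := by
    intro j hj
    have hj : j ≤ 2 * r := Nat.lt_succ_iff.mp (mem_range.mp hj)
    refine mul_le_mul_of_nonneg_left ((le_abs_self _).trans ?_) (by positivity)
    rw [abs_mul]
    exact mul_le_mul (hS.abs_integral_pow_le (by omega)) (hX.abs_integral_pow_le (by omega))
      (abs_nonneg _) (pow_nonneg lpNorm_nonneg _)
  rw [integral_add_pow_eq_sum hSX hS hX, show 2 * (r + 1) + 1 = 2 * r + 1 + 1 + 1 by ring,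
    sum_range_succ, sum_range_succ]
  simp only [show 2 * (r + 1) = 2 * r + 2 by ring, show 2 * r + 2 - (2 * r + 1) = 1 by omega,
    Nat.sub_self, pow_one, pow_zero, hXc, Nat.choose_self] at hSpow ⊢
  simp only [mul_zero, add_zero, integral_const, probReal_univ, smul_eq_mul, mul_one,
    Nat.cast_one, one_mul, Nat.add_sub_cancel]
  rw [hSpow, add_comm]
  gcongr
  exact (sum_le_sum hterm).trans (sum_choose_mul_pow_le r lpNorm_nonneg lpNorm_nonneg)

end Moments

section Independence

variable {Ω : Type*} {m m' : MeasurableSpace Ω} [mΩ : MeasurableSpace Ω] {μ : Measure Ω}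

lemma indepFun_of_indep (h : Indep m m' μ) {f g : Ω → ℝ} (hf : Measurable[m] f)
    (hg : Measurable[m'] g) : IndepFun f g μ :=
  (IndepFun_iff_Indep f g μ).2
    (indep_of_indep_of_le_right (indep_of_indep_of_le_left h hf.comap_le) hg.comap_le)

lemma setIntegral_pow_le_setIntegral_add_pow [IsProbabilityMeasure μ] (hm : m ≤ mΩ)
    (hindep : Indep m m' μ) {Y T : Ω → ℝ} (hY : Measurable[m] Y) (hT : Measurable[m'] T)
    {q : ℕ} (hq : q ≠ 0) (hYL : MemLp Y (2 * q : ℕ) μ) (hTL : MemLp T (2 * q : ℕ) μ)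
    (hTc : ∫ ω, T ω ∂μ = 0) {A : Set Ω} (hA : MeasurableSet[m] A) :
    ∫ ω in A, Y ω ^ (2 * q) ∂μ ≤ ∫ ω in A, (Y ω + T ω) ^ (2 * q) ∂μ := by
  have hT1 : Integrable T μ := hTL.integrable (by norm_cast; omega)
  have hYpow : Integrable (fun ω => Y ω ^ (2 * q - 1)) μ := hYL.integrable_pow_of_le (by omega)
  have hcross : Integrable (fun ω => Y ω ^ (2 * q - 1) * T ω) μ :=
    (indepFun_of_indep hindep (hY.pow_const _) hT).integrable_mul hYpow hT1
  have hzero : ∫ ω in A, Y ω ^ (2 * q - 1) * T ω ∂μ = 0 := by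
    rw [← integral_indicator (hm _ hA)]
    simp_rw [Set.indicator_mul_left]
    rw [(indepFun_of_indep hindep ((hY.pow_const _).indicator hA) hT)
      |>.integral_fun_mul_eq_mul_integral (hYpow.indicator (hm _ hA)).1 hT1.1, hTc, mul_zero]
  calc ∫ ω in A, Y ω ^ (2 * q) ∂μ
      = ∫ ω in A, (Y ω ^ (2 * q) + 2 * q * (Y ω ^ (2 * q - 1) * T ω)) ∂μ := by
        rw [integral_add (hYL.integrable_pow_of_le le_rfl).integrableOn
          (hcross.const_mul _).integrableOn, integral_const_mul, hzero, mul_zero, add_zero]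
    _ ≤ ∫ ω in A, (Y ω + T ω) ^ (2 * q) ∂μ := by
        refine integral_mono
          ((hYL.integrable_pow_of_le le_rfl).add (hcross.const_mul _)).integrableOn
          ((hYL.add hTL).integrable_pow_of_le le_rfl).integrableOn fun ω => ?_
        have := (even_two_mul q).pow_add_mul_le_add_pow (Y ω) (T ω)
        push_cast at this
        linarith

end Independence

section PartialSums

variable {Ω : Type*} {ξ : ℕ → Ω → ℝ}

def partialSum (ξ : ℕ → Ω → ℝ) (n : ℕ) : Ω → ℝ := ∑ k ∈ range n, ξ k

@[simp] lemma partialSum_apply (n : ℕ) (ω : Ω) : partialSum ξ n ω = ∑ k ∈ range n, ξ k ω :=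
  sum_apply ω _ _

lemma partialSum_succ (n : ℕ) : partialSum ξ (n + 1) = partialSum ξ n + ξ n := sum_range_succ _ _

variable [MeasurableSpace Ω] {μ : Measure Ω}

lemma memLp_partialSum {p : ENNReal} (hξ : ∀ k, MemLp (ξ k) p μ) (n : ℕ) : MemLp (partialSum ξ n) p μ :=
  memLp_finsetSum' _ fun k _ => hξ k

variable [IsProbabilityMeasure μ] {q : ℕ}

theorem lpNorm_partialSum_pow_le (hq : q ≠ 0) (hmeas : ∀ k, Measurable (ξ k))
    (hindep : iIndepFun ξ μ) (hξ : ∀ k, MemLp (ξ k) (2 * q : ℕ) μ)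
    (hcent : ∀ k, ∫ ω, ξ k ω ∂μ = 0) (n : ℕ) :
    lpNorm (partialSum ξ n) (2 * q : ℕ) μ ^ (2 * q)
      ≤ (4 ^ q) ^ q * (∑ k ∈ range n, lpNorm (ξ k) (2 * q : ℕ) μ ^ 2) ^ q := by
  induction n with
  | zero => simp [partialSum, zero_pow (show 2 * q ≠ 0 by omega), zero_pow hq]
  | succ n ih =>
    set x := lpNorm (partialSum ξ n) (2 * q : ℕ) μ
    set y := lpNorm (ξ n) (2 * q : ℕ) μ
    set D := ∑ k ∈ range n, lpNorm (ξ k) (2 * q : ℕ) μ ^ 2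
    have hD : 0 ≤ D := sum_nonneg fun _ _ => sq_nonneg _
    have hxD : x ^ 2 ≤ 4 ^ q * D := by
      rw [pow_mul, ← mul_pow] at ih
      exact (pow_le_pow_iff_left₀ (sq_nonneg x) (by positivity) hq).1 ih
    have hindep_n : IndepFun (partialSum ξ n) (ξ n) μ :=
      hindep.indepFun_finsetSum_of_notMem hmeas notMem_range_self
    have hS := memLp_partialSum hξ (n + 1)
    rw [← (hS.integral_even_pow_eq_lpNorm_pow (even_two_mul q) (by omega)), sum_range_succ]
    simp only [partialSum_succ, Pi.add_apply]
    calc ∫ ω, (partialSum ξ n ω + ξ n ω) ^ (2 * q) ∂μ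
        ≤ x ^ (2 * q) + 4 ^ q * y ^ 2 * (x ^ 2 + y ^ 2) ^ (q - 1) :=
          integral_add_pow_le hindep_n hq (memLp_partialSum hξ n) (hξ n) (hcent n)
      _ ≤ (4 ^ q) ^ q * (D + y ^ 2) ^ q :=
          pow_add_mul_sq_le hq (one_le_pow₀ (by norm_num)) hD hxD

theorem integral_partialSum_pow_le (hq : q ≠ 0) (hmeas : ∀ k, Measurable (ξ k))
    (hindep : iIndepFun ξ μ) (hξ : ∀ k, MemLp (ξ k) (2 * q : ℕ) μ)
    (hcent : ∀ k, ∫ ω, ξ k ω ∂μ = 0) (n : ℕ) :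
    ∫ ω, partialSum ξ n ω ^ (2 * q) ∂μ
      ≤ (4 ^ q) ^ q * n ^ (q - 1) * ∑ k ∈ range n, ∫ ω, ξ k ω ^ (2 * q) ∂μ := by
  obtain ⟨r, rfl⟩ : ∃ r, q = r + 1 := ⟨q - 1, by omega⟩
  have hpow : ∀ X : Ω → ℝ, MemLp X (2 * (r + 1) : ℕ) μ →
      ∫ ω, X ω ^ (2 * (r + 1)) ∂μ = (lpNorm X (2 * (r + 1) : ℕ) μ ^ 2) ^ (r + 1) := fun X hX => by
    rw [← pow_mul, hX.integral_even_pow_eq_lpNorm_pow (even_two_mul _) (by omega)]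
  simp only [hpow _ (memLp_partialSum hξ n), hpow _ (hξ _), Nat.add_sub_cancel]
  calc _ ≤ (4 ^ (r + 1)) ^ (r + 1)
        * (∑ k ∈ range n, lpNorm (ξ k) (2 * (r + 1) : ℕ) μ ^ 2) ^ (r + 1) := by
        rw [← pow_mul]; exact lpNorm_partialSum_pow_le (by omega) hmeas hindep hξ hcent n
    _ ≤ _ := by
        rw [mul_assoc]
        gcongr
        simpa using pow_sum_le_card_mul_sum_pow (s := range n) (fun _ _ => sq_nonneg _) r

end PartialSums

section Filtration

variable {Ω : Type*} {ξ : ℕ → Ω → ℝ}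

abbrev sigmaOf (ξ : ℕ → Ω → ℝ) (s : Set ℕ) : MeasurableSpace Ω :=
  ⨆ k ∈ s, MeasurableSpace.comap (ξ k) inferInstance

lemma measurable_sum_sigmaOf {s : Set ℕ} {t : Finset ℕ} (hts : ↑t ⊆ s) :
    Measurable[sigmaOf ξ s] (∑ k ∈ t, ξ k) :=
  sum_induction _ (fun f => Measurable[sigmaOf ξ s] f) (fun _ _ => Measurable.add) measurable_const
    fun k hk => (comap_measurable (ξ k)).mono (le_iSup₂ (f := fun k (_ : k ∈ s) =>
      MeasurableSpace.comap (ξ k) inferInstance) k (hts hk)) le_rfl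

variable [mΩ : MeasurableSpace Ω] {μ : Measure Ω}

lemma sigmaOf_le (hmeas : ∀ k, Measurable (ξ k)) (s : Set ℕ) : sigmaOf ξ s ≤ mΩ :=
  iSup₂_le fun k _ => (hmeas k).comap_le

lemma indep_sigmaOf (hmeas : ∀ k, Measurable (ξ k)) (hindep : iIndepFun ξ μ) {s t : Set ℕ}
    (hst : Disjoint s t) : Indep (sigmaOf ξ s) (sigmaOf ξ t) μ :=
  indep_iSup_of_disjoint (fun k => (hmeas k).comap_le) hindep.iIndep hst

def pastFiltration (hmeas : ∀ k, Measurable (ξ k)) : Filtration ℕ mΩ where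
  seq n := sigmaOf ξ (Set.Iio n)
  mono' _ _ h := biSup_mono fun _ hk => lt_of_lt_of_le hk h
  le' _ := sigmaOf_le hmeas _

variable [IsProbabilityMeasure μ] {q : ℕ}

theorem submartingale_partialSum_pow (hq : q ≠ 0) (hmeas : ∀ k, Measurable (ξ k))
    (hindep : iIndepFun ξ μ) (hξ : ∀ k, MemLp (ξ k) (2 * q : ℕ) μ)
    (hcent : ∀ k, ∫ ω, ξ k ω ∂μ = 0) :
    Submartingale (fun n ω => partialSum ξ n ω ^ (2 * q)) (pastFiltration hmeas) μ := by
  have hpast : ∀ n, Measurable[pastFiltration hmeas n] (partialSum ξ n) := fun n =>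
    measurable_sum_sigmaOf fun k hk => by simpa using hk
  refine submartingale_of_setIntegral_le (fun n => ((hpast n).pow_const _).stronglyMeasurable)
    (fun n => (memLp_partialSum hξ n).integrable_pow_of_le le_rfl) fun i j hij A hA => ?_
  have hsplit : partialSum ξ j = partialSum ξ i + ∑ k ∈ Ico i j, ξ k :=
    (sum_range_add_sum_Ico _ hij).symm
  simp only [hsplit, Pi.add_apply]
  refine setIntegral_pow_le_setIntegral_add_pow (sigmaOf_le hmeas _)
    (indep_sigmaOf hmeas hindep (s := Set.Iio i) (t := Set.Ico i j) ?_) (hpast i)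
    (measurable_sum_sigmaOf (by simp)) hq (memLp_partialSum hξ i)
    (memLp_finsetSum' _ fun k _ => hξ k) ?_ hA
  · exact Set.disjoint_left.2 fun k hk hk' => (not_le.2 hk) hk'.1
  · simp_rw [Finset.sum_apply]
    rw [integral_finsetSum _ fun k _ => (hξ k).integrable (by norm_cast; omega)]
    exact sum_eq_zero fun k _ => hcent k

theorem measure_exists_le_abs_partialSum_le (hq : q ≠ 0) (hmeas : ∀ k, Measurable (ξ k))
    (hindep : iIndepFun ξ μ) (hξ : ∀ k, MemLp (ξ k) (2 * q : ℕ) μ)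
    (hcent : ∀ k, ∫ ω, ξ k ω ∂μ = 0) {c : ℝ} (hc : 0 < c) (n : ℕ) :
    μ {ω | ∃ k ≤ n, c ≤ |partialSum ξ k ω|}
      ≤ ENNReal.ofReal ((∫ ω, partialSum ξ n ω ^ (2 * q) ∂μ) / c ^ (2 * q)) := by
  have hc' : 0 < c ^ (2 * q) := by positivity
  have hmax := maximal_ineq (submartingale_partialSum_pow hq hmeas hindep hξ hcent)
    (fun _ _ => (even_two_mul q).pow_nonneg _) (ε := (c ^ (2 * q)).toNNReal) n
  have hset : {ω | c ^ (2 * q) ≤ (range (n + 1)).sup'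
      nonempty_range_add_one fun k => partialSum ξ k ω ^ (2 * q)}
      = {ω | ∃ k ≤ n, c ≤ |partialSum ξ k ω|} := by
    ext ω
    simp only [Set.mem_ofPred_eq, le_sup'_iff, mem_range, Nat.lt_succ_iff,
      ← (even_two_mul q).pow_abs (partialSum ξ _ ω)]
    simp_rw [pow_le_pow_iff_left₀ hc.le (abs_nonneg _) (by omega : 2 * q ≠ 0)]
  rw [Real.coe_toNNReal _ hc'.le] at hmax
  rw [hset] at hmax
  rw [ENNReal.ofReal_div_of_pos hc', ENNReal.le_div_iff_mul_le (by simp [hc']) (by simp),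
    mul_comm]
  refine hmax.trans (ENNReal.ofReal_le_ofReal (setIntegral_le_integral
    ((memLp_partialSum hξ n).integrable_pow_of_le le_rfl)
    (ae_of_all _ fun ω => (even_two_mul q).pow_nonneg _)))

end Filtration

section BorelCantelli

variable {Ω : Type*} [MeasurableSpace Ω] {μ : Measure Ω} [IsProbabilityMeasure μ]
  {ξ : ℕ → Ω → ℝ} {q : ℕ}

theorem tsum_measure_dyadic_ne_top (hq : q ≠ 0) (hmeas : ∀ k, Measurable (ξ k))
    (hindep : iIndepFun ξ μ) (hξ : ∀ k, MemLp (ξ k) (2 * q : ℕ) μ)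
    (hcent : ∀ k, ∫ ω, ξ k ω ∂μ = 0)
    (hsum : Summable fun k : ℕ => (∫ ω, ξ k ω ^ (2 * q) ∂μ) / ((k : ℝ) + 1) ^ (q + 1))
    {ε : ℝ} (hε : 0 < ε) :
    ∑' m, μ {ω | ∃ k ≤ 2 ^ (m + 1), ε * 2 ^ m ≤ |partialSum ξ k ω|} ≠ ⊤ := by
  set b : ℕ → ℝ := fun k => ∫ ω, ξ k ω ^ (2 * q) ∂μ
  have hb : ∀ k, 0 ≤ b k := fun k => integral_nonneg fun ω => (even_two_mul q).pow_nonneg _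
  set C : ℝ := (4 ^ q) ^ q * 2 ^ (q - 1) / ε ^ (2 * q)
  have hbound : ∀ m, μ {ω | ∃ k ≤ 2 ^ (m + 1), ε * 2 ^ m ≤ |partialSum ξ k ω|}
      ≤ ENNReal.ofReal (C * (((2 : ℝ) ^ (q + 1))⁻¹ ^ m * ∑ k ∈ range (2 ^ (m + 1)), b k)) := by
    intro m
    refine (measure_exists_le_abs_partialSum_le hq hmeas hindep hξ hcent (by positivity) _).trans
      (ENNReal.ofReal_le_ofReal ?_)
    calc (∫ ω, partialSum ξ (2 ^ (m + 1)) ω ^ (2 * q) ∂μ) / (ε * 2 ^ m) ^ (2 * q)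
        ≤ (4 ^ q) ^ q * ((2 ^ (m + 1) : ℕ) : ℝ) ^ (q - 1) * (∑ k ∈ range (2 ^ (m + 1)), b k)
          / (ε * 2 ^ m) ^ (2 * q) := by
          gcongr; exact integral_partialSum_pow_le hq hmeas hindep hξ hcent _
      _ = _ := by
          push_cast
          rw [mul_pow, two_pow_succ_pow_eq q m hq]
          simp only [C]
          field_simp
  have hsummable :=
    (summable_geometric_mul_sum_range_two_pow hb (Nat.succ_ne_zero q) hsum).mul_left C
  refine ne_top_of_le_ne_top ?_ (ENNReal.tsum_le_tsum hbound)
  rw [← ENNReal.ofReal_tsum_of_nonneg (fun m => mul_nonneg (by positivity)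
    (mul_nonneg (by positivity) (sum_nonneg fun k _ => hb k))) hsummable]
  exact ENNReal.ofReal_ne_top

end BorelCantelli

theorem brunk_prohorov_dim_one_general
    {Ω : Type*} [MeasurableSpace Ω] {μ : Measure Ω} [IsProbabilityMeasure μ]
    (q : ℕ) (hq : 1 ≤ q)
    (ξ : ℕ → Ω → ℝ)
    (hmeas : ∀ k, Measurable (ξ k))
    (hindep : iIndepFun ξ μ)
    (hcent : ∀ k, ∫ ω, ξ k ω ∂μ = 0)
    (h2q : ∀ k, Integrable (fun ω => (ξ k ω) ^ (2 * q)) μ)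
    (hsum : Summable (fun k : ℕ =>
      (∫ ω, (ξ k ω) ^ (2 * q) ∂μ) / ((k : ℝ) + 1) ^ (q + 1))) :
    ∀ᵐ ω ∂μ, Filter.Tendsto
      (fun n : ℕ => (∑ k ∈ Finset.range n, ξ k ω) / (n : ℝ))
      Filter.atTop (nhds 0) := by
  have hq0 : q ≠ 0 := by omega
  have hξ : ∀ k, MemLp (ξ k) (2 * q : ℕ) μ := fun k =>
    memLp_of_integrable_pow (hmeas k).aestronglyMeasurable (even_two_mul q) (by omega) (h2q k)
  have hblock : ∀ j : ℕ, ∀ᵐ ω ∂μ, ∀ᶠ m in atTop,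
      ∀ k ≤ 2 ^ (m + 1), |partialSum ξ k ω| < 2 ^ m / (j + 1) := fun j => by
    filter_upwards [ae_eventually_notMem (tsum_measure_dyadic_ne_top hq0 hmeas hindep hξ hcent hsum
      (Nat.one_div_pos_of_nat (n := j)))] with ω hω
    filter_upwards [hω] with m hm k hk
    simp only [not_exists, not_and, not_le] at hm
    simpa [div_eq_inv_mul] using hm k hk
  filter_upwards [ae_all_iff.2 hblock] with ω hω
  simpa using tendsto_div_of_eventually_dyadic hω

/-- **Brunk–Prohorov theorem (dimension one).**
If `{ξ_k : k ≥ 1}` are independent centered random variables with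
`Σ_{k≥1} E ξ_k^{2q} / k^{q+1} < ∞` for an integer `q ≥ 1`, then
`ζ_n/n → 0` a.s., where `ζ_n = ξ_1 + ⋯ + ξ_n`.
(Here the sequence is indexed by `0, 1, 2, …`, with `ξ k` standing for `ξ_{k+1}`, so
`ζ_n = Σ_{k<n} ξ_k` and the series condition reads `Σ_k E ξ_k^{2q}/(k+1)^{q+1} < ∞`.) -/
theorem brunk_prohorov_dim_one
    {Ω : Type*} [MeasurableSpace Ω] {μ : Measure Ω} [IsProbabilityMeasure μ]
    (q : ℕ) (hq : 1 ≤ q)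
    (ξ : ℕ → Ω → ℝ)
    (hmeas : ∀ k, Measurable (ξ k))
    (hindep : iIndepFun ξ μ)
    (hint : ∀ k, Integrable (ξ k) μ)
    (hcent : ∀ k, ∫ ω, ξ k ω ∂μ = 0)
    (h2q : ∀ k, Integrable (fun ω => (ξ k ω) ^ (2 * q)) μ)
    (hsum : Summable (fun k : ℕ =>
      (∫ ω, (ξ k ω) ^ (2 * q) ∂μ) / ((k : ℝ) + 1) ^ (q + 1))) :
    ∀ᵐ ω ∂μ, Filter.Tendsto
      (fun n : ℕ => (∑ k ∈ Finset.range n, ξ k ω) / (n : ℝ))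
      Filter.atTop (nhds 0) :=
  brunk_prohorov_dim_one_general q hq ξ hmeas hindep hcent h2q hsum
end

section
/- Let r ≥ 1 be an integer and α ∈ (1,2]. Let {Z_n : n ∈ ℕ^r} be a random field with E|Z_n|^α < ∞ whose rectangular partial sums S_n = Σ_{k≤n} Z_k form a multiparameter martingale: for all n, m ∈ ℕ^r, the conditional expectation of S_n given the σ-algebra generated by {S_k : k ≤ m} equals S_{n∧m} almost surely, where n∧m is the coordinatewise minimum. Then for every N ∈ ℕ^r, E|S_N|^α ≤ 2^r Σ_{k≤N} E|Z_k|^α. -/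
/-!
For one parameter, if `X` is `G`-measurable and `E[Y | G] = 0`, conditional Jensen gives
`E|X|^α ≤ E|X - Y|^α`, and integrating the Clarkson inequality
`|a + b|^α + |a - b|^α ≤ 2 (|a|^α + |b|^α)` (valid for `α ≤ 2`) turns this into
`E|X + Y|^α ≤ E|X|^α + 2 E|Y|^α`; iterating along a martingale gives
`E|∑ D_s|^α ≤ 2 ∑ E|D_s|^α`.

For `r` parameters the coordinates are summed out one at a time. Summing `Z` over a box whose
coordinates in a set `A` are frozen gives the mixed increment of `S` in the directions of `A`; by
inclusion–exclusion the martingale property of `S` passes to these increments. So, freezing the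
coordinates outside `C ∪ {i}`, the sums with `i` also frozen are martingale differences in the
`i`-th coordinate, and the one-parameter inequality adds a factor `2` for each summed coordinate.
-/

open MeasureTheory ProbabilityTheory Finset

/-- The σ-algebra generated by the partial sums `S_k`, `k ≤ m`. -/
def sigmaOfSums {r : ℕ} {Ω : Type*} (S : (Fin r → ℕ) → Ω → ℝ) (m : Fin r → ℕ) :
    MeasurableSpace Ω :=
  ⨆ k ∈ Finset.Icc (1 : Fin r → ℕ) m, MeasurableSpace.comap (S k) inferInstance

namespace VonBahrEsseen

lemma abs_rpow_eq_sq_rpow_half (α x : ℝ) : |x| ^ α = (x ^ 2) ^ (α / 2) := by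
  rw [← sq_abs, ← Real.rpow_natCast, ← Real.rpow_mul (abs_nonneg x)]
  ring_nf

lemma abs_add_rpow_add_abs_sub_rpow_le {α : ℝ} (hα0 : 0 ≤ α) (hα2 : α ≤ 2) (a b : ℝ) :
    |a + b| ^ α + |a - b| ^ α ≤ 2 * (|a| ^ α + |b| ^ α) := by
  have hs0 : 0 ≤ α / 2 := by linarith
  have hs1 : α / 2 ≤ 1 := by linarith
  simp only [abs_rpow_eq_sq_rpow_half α]
  have hmid := (Real.concaveOn_rpow hs0 hs1).2 (sq_nonneg (a + b)) (sq_nonneg (a - b))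
    (by norm_num : (0 : ℝ) ≤ 1 / 2) (by norm_num : (0 : ℝ) ≤ 1 / 2) (by norm_num)
  have hsub := Real.rpow_add_le_add_rpow (sq_nonneg a) (sq_nonneg b) hs0 hs1
  have hpar : 1 / 2 * (a + b) ^ 2 + 1 / 2 * (a - b) ^ 2 = a ^ 2 + b ^ 2 := by ring
  simp only [smul_eq_mul, hpar] at hmid
  linarith

section Moments

variable {Ω : Type*} {G m0 : MeasurableSpace Ω} {μ : Measure Ω} [IsFiniteMeasure μ] {α : ℝ}

lemma integral_abs_condExp_rpow_le (hα : 1 ≤ α) (hG : G ≤ m0) {W : Ω → ℝ}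
    (hW : Integrable (fun ω => |W ω| ^ α) μ) :
    ∫ ω, |μ[W|G] ω| ^ α ∂μ ≤ ∫ ω, |W ω| ^ α ∂μ := by
  calc ∫ ω, |μ[W|G] ω| ^ α ∂μ ≤ ∫ ω, μ[fun ω => |W ω| ^ α|G] ω ∂μ :=
        integral_mono_of_nonneg (Filter.Eventually.of_forall fun ω => by positivity)
          integrable_condExp (by simpa only [Real.norm_eq_abs] using
            Integrable.norm_condExp_rpow_le (f := W) (m := G) hα hW)
    _ = ∫ ω, |W ω| ^ α ∂μ := integral_condExp hG

lemma integrable_abs_rpow_of_memLp (hα : 0 ≤ α) {f : Ω → ℝ}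
    (hf : MemLp f (ENNReal.ofReal α) μ) : Integrable (fun ω => |f ω| ^ α) μ := by
  simpa only [Real.norm_eq_abs, ENNReal.toReal_ofReal hα] using hf.integrable_norm_rpow'

lemma integral_abs_add_rpow_le (hα1 : 1 ≤ α) (hα2 : α ≤ 2) (hG : G ≤ m0) {X Y : Ω → ℝ}
    (hX : MemLp X (ENNReal.ofReal α) μ) (hY : MemLp Y (ENNReal.ofReal α) μ)
    (hXG : μ[X|G] =ᵐ[μ] X) (hYG : μ[Y|G] =ᵐ[μ] 0) :
    ∫ ω, |X ω + Y ω| ^ α ∂μ ≤ ∫ ω, |X ω| ^ α ∂μ + 2 * ∫ ω, |Y ω| ^ α ∂μ := by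
  have hα0 : 0 ≤ α := by linarith
  have hp : 1 ≤ ENNReal.ofReal α := by simpa using hα1
  have hXα := integrable_abs_rpow_of_memLp hα0 hX
  have hYα := integrable_abs_rpow_of_memLp hα0 hY
  have hXYα : Integrable (fun ω => |X ω + Y ω| ^ α) μ :=
    integrable_abs_rpow_of_memLp hα0 (hX.add hY)
  have hXYα' : Integrable (fun ω => |X ω - Y ω| ^ α) μ :=
    integrable_abs_rpow_of_memLp hα0 (hX.sub hY)
  have hcond : μ[X - Y|G] =ᵐ[μ] X := by
    filter_upwards [condExp_sub (hX.integrable hp) (hY.integrable hp) G, hXG, hYG]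
      with ω h hXω hYω
    simp [h, hXω, hYω]
  have jensen : ∫ ω, |X ω| ^ α ∂μ ≤ ∫ ω, |X ω - Y ω| ^ α ∂μ :=
    calc ∫ ω, |X ω| ^ α ∂μ = ∫ ω, |μ[X - Y|G] ω| ^ α ∂μ :=
          integral_congr_ae (by filter_upwards [hcond] with ω h; rw [h])
      _ ≤ ∫ ω, |X ω - Y ω| ^ α ∂μ := integral_abs_condExp_rpow_le hα1 hG hXYα'
  have clarkson : ∫ ω, |X ω + Y ω| ^ α ∂μ + ∫ ω, |X ω - Y ω| ^ α ∂μ ≤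
      2 * (∫ ω, |X ω| ^ α ∂μ + ∫ ω, |Y ω| ^ α ∂μ) := by
    rw [← integral_add hXYα hXYα', ← integral_add hXα hYα, ← integral_const_mul]
    exact integral_mono (hXYα.add hXYα') ((hXα.add hYα).const_mul 2)
      fun ω => abs_add_rpow_add_abs_sub_rpow_le hα0 hα2 (X ω) (Y ω)
  linarith

theorem integral_abs_sum_range_rpow_le (hα1 : 1 ≤ α) (hα2 : α ≤ 2)
    {G : ℕ → MeasurableSpace Ω} (hG : ∀ t, G t ≤ m0) {D : ℕ → Ω → ℝ}
    (hD : ∀ s, MemLp (D s) (ENNReal.ofReal α) μ)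
    (hsum : ∀ t, μ[∑ s ∈ range (t + 1), D s|G t] =ᵐ[μ] ∑ s ∈ range (t + 1), D s)
    (hcentred : ∀ t, μ[D (t + 1)|G t] =ᵐ[μ] 0) (T : ℕ) :
    ∫ ω, |∑ s ∈ range T, D s ω| ^ α ∂μ ≤ 2 * ∑ s ∈ range T, ∫ ω, |D s ω| ^ α ∂μ := by
  have hnonneg : ∀ s, 0 ≤ ∫ ω, |D s ω| ^ α ∂μ := fun s =>
    integral_nonneg fun ω => by positivity
  induction T with
  | zero => simp [Real.zero_rpow (by linarith : α ≠ 0)]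
  | succ T ih =>
    cases T with
    | zero =>
      simp only [zero_add, sum_range_one]
      linarith [hnonneg 0]
    | succ T =>
      have hstep := integral_abs_add_rpow_le hα1 hα2 (hG T)
        (memLp_finsetSum' _ fun s _ => hD s) (hD (T + 1)) (hsum T) (hcentred T)
      simp only [Finset.sum_apply] at hstep
      simp_rw [sum_range_succ _ (T + 1), mul_add]
      linarith [hnonneg (T + 1)]

end Moments

section Box

variable {r : ℕ}

/-- Summing `Z` over `box A u` gives the increment of the rectangular partial sums at `u` in the
directions of `A`: the coordinates in `A` are frozen at `u`, the others range over `[1, u i]`. -/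
def box (A : Finset (Fin r)) (u : Fin r → ℕ) : Finset (Fin r → ℕ) :=
  Icc (fun i => if i ∈ A then u i else 1) u

lemma mem_box {A : Finset (Fin r)} {u k : Fin r → ℕ} :
    k ∈ box A u ↔ ∀ i, (if i ∈ A then u i else 1) ≤ k i ∧ k i ≤ u i := by
  simp only [box, mem_Icc, Pi.le_def, forall_and]

lemma box_empty (u : Fin r → ℕ) : box ∅ u = Icc 1 u :=
  rfl

lemma box_univ (u : Fin r → ℕ) : box univ u = {u} := by
  simp [box]

lemma one_le_of_mem_box {A : Finset (Fin r)} {u k : Fin r → ℕ} (hu : ∀ i ∈ A, 1 ≤ u i)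
    (hk : k ∈ box A u) (i : Fin r) : 1 ≤ k i := by
  have := (mem_box.1 hk i).1
  split_ifs at this with hi
  · exact (hu i hi).trans this
  · exact this

lemma one_le_update {n : Fin r → ℕ} (hn : ∀ i, 1 ≤ n i) (i : Fin r) {s : ℕ} (hs : 1 ≤ s)
    (j : Fin r) : 1 ≤ Function.update n i s j := by
  rcases eq_or_ne j i with rfl | hji
  · simpa using hs
  · simpa [hji] using hn j

lemma sum_box_eq_add {M : Type*} [AddCommMonoid M] {A : Finset (Fin r)} {j : Fin r} (hj : j ∉ A)
    {u : Fin r → ℕ} (hu : 1 ≤ u j) (g : (Fin r → ℕ) → M) :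
    ∑ k ∈ box A u, g k =
      ∑ k ∈ box A (Function.update u j (u j - 1)), g k + ∑ k ∈ box (insert j A) u, g k := by
  rw [← sum_filter_not_add_sum_filter (box A u) (fun k => k j = u j)]
  congr 2 <;> ext k <;> simp only [mem_filter, mem_box, mem_insert, Function.update_apply] <;>
    grind

lemma sum_box_insert {M : Type*} [AddCommGroup M] {A : Finset (Fin r)} {j : Fin r} (hj : j ∉ A)
    {u : Fin r → ℕ} (hu : 1 ≤ u j) (g : (Fin r → ℕ) → M) :
    ∑ k ∈ box (insert j A) u, g k =
      ∑ k ∈ box A u, g k - ∑ k ∈ box A (Function.update u j (u j - 1)), g k := by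
  rw [sum_box_eq_add hj hu, add_sub_cancel_left]

lemma sum_box_erase_update_eq_sum_range {M : Type*} [AddCommMonoid M] {A : Finset (Fin r)}
    {i : Fin r} (hi : i ∈ A) (u : Fin r → ℕ) (g : (Fin r → ℕ) → M) (t : ℕ) :
    ∑ k ∈ box (A.erase i) (Function.update u i t), g k =
      ∑ s ∈ range t, ∑ k ∈ box A (Function.update u i (s + 1)), g k := by
  induction t with
  | zero =>
    have hempty : box (A.erase i) (Function.update u i 0) = ∅ :=
      Icc_eq_empty fun h => by simpa using h i
    simp [hempty]
  | succ t ih =>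
    rw [sum_box_eq_add (notMem_erase i A) (by simp), sum_range_succ, Function.update_self,
      Function.update_idem, Nat.add_sub_cancel, ih, insert_erase hi]

end Box

section RectangularMartingale

variable {r : ℕ} {Ω : Type*} {Z : (Fin r → ℕ) → Ω → ℝ}

def partialSum (Z : (Fin r → ℕ) → Ω → ℝ) (n : Fin r → ℕ) : Ω → ℝ :=
  fun ω => ∑ k ∈ Icc 1 n, Z k ω

lemma partialSum_eq_sum_box (n : Fin r → ℕ) : partialSum Z n = ∑ k ∈ box ∅ n, Z k := by
  ext ω
  simp [partialSum, box_empty, Finset.sum_apply]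

lemma partialSum_eq_zero {n : Fin r → ℕ} {i : Fin r} (hi : n i = 0) : partialSum Z n = 0 := by
  have : Icc 1 n = ∅ := Icc_eq_empty fun h => by simpa [hi] using h i
  ext ω
  simp [partialSum, this]

variable [m0 : MeasurableSpace Ω] {μ : Measure Ω}

variable (Z μ) in
def IsRectangularMartingale : Prop :=
  ∀ n m : Fin r → ℕ, (∀ i, 1 ≤ n i) → (∀ i, 1 ≤ m i) →
    μ[partialSum Z n | sigmaOfSums (partialSum Z) m] =ᵐ[μ] partialSum Z (n ⊓ m)

lemma sigmaOfSums_partialSum_le (hZ : ∀ n, Measurable (Z n)) (m : Fin r → ℕ) :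
    sigmaOfSums (partialSum Z) m ≤ m0 :=
  iSup₂_le fun _ _ => (Finset.measurable_sum _ fun k _ => hZ k).comap_le

lemma integrable_sum_box (hZ : ∀ n, (∀ i, 1 ≤ n i) → Integrable (Z n) μ)
    {A : Finset (Fin r)} {u : Fin r → ℕ} (hu : ∀ i ∈ A, 1 ≤ u i) :
    Integrable (∑ k ∈ box A u, Z k) μ :=
  integrable_finsetSum' _ fun k hk => hZ k (one_le_of_mem_box hu hk)

lemma condExp_partialSum (hmart : IsRectangularMartingale Z μ) {m : Fin r → ℕ}
    (hm : ∀ i, 1 ≤ m i) (n : Fin r → ℕ) :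
    μ[partialSum Z n | sigmaOfSums (partialSum Z) m] =ᵐ[μ] partialSum Z (n ⊓ m) := by
  by_cases hn : ∀ i, 1 ≤ n i
  · exact hmart n m hn hm
  · obtain ⟨i, hi⟩ := not_forall.1 hn
    rw [partialSum_eq_zero (n := n) (i := i) (by omega),
      partialSum_eq_zero (n := n ⊓ m) (i := i) (by simp only [Pi.inf_apply]; omega),
      condExp_zero]

lemma condExp_sum_box (hmart : IsRectangularMartingale Z μ)
    (hZ : ∀ n, (∀ i, 1 ≤ n i) → Integrable (Z n) μ)
    {m : Fin r → ℕ} (hm : ∀ i, 1 ≤ m i) (A : Finset (Fin r)) {u : Fin r → ℕ}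
    (hu : ∀ i ∈ A, 1 ≤ u i) (hum : ∀ i ∈ A, u i ≤ m i) :
    μ[∑ k ∈ box A u, Z k | sigmaOfSums (partialSum Z) m] =ᵐ[μ] ∑ k ∈ box A (u ⊓ m), Z k := by
  induction A using Finset.induction_on generalizing u with
  | empty => simpa only [← partialSum_eq_sum_box] using condExp_partialSum hmart hm u
  | insert j A hj ih =>
    have huj := hu j (mem_insert_self j A)
    have hujm := hum j (mem_insert_self j A)
    rw [sum_box_insert hj huj, sum_box_insert hj (by simp only [Pi.inf_apply]; omega)]
    set u' := Function.update u j (u j - 1)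
    have hinf : Function.update (u ⊓ m) j ((u ⊓ m) j - 1) = u' ⊓ m := by
      ext i
      rcases eq_or_ne i j with rfl | hij
      · simp only [Function.update_self, Pi.inf_apply, u']
        omega
      · simp [hij, u']
    have hu' : ∀ i ∈ A, u' i = u i := fun i hi =>
      Function.update_of_ne (ne_of_mem_of_not_mem hi hj) _ _
    have hAu : ∀ i ∈ A, 1 ≤ u i := fun i hi => hu i (mem_insert_of_mem hi)
    have hAum : ∀ i ∈ A, u i ≤ m i := fun i hi => hum i (mem_insert_of_mem hi)
    have hAu' : ∀ i ∈ A, 1 ≤ u' i := fun i hi => by rw [hu' i hi]; exact hAu i hi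
    have hAum' : ∀ i ∈ A, u' i ≤ m i := fun i hi => by rw [hu' i hi]; exact hAum i hi
    rw [hinf]
    exact (condExp_sub (integrable_sum_box hZ hAu) (integrable_sum_box hZ hAu') _).trans
      ((ih hAu hAum).sub (ih hAu' hAum'))

lemma condExp_sum_box_eq_zero (hmart : IsRectangularMartingale Z μ)
    (hZ : ∀ n, (∀ i, 1 ≤ n i) → Integrable (Z n) μ)
    {m : Fin r → ℕ} (hm : ∀ i, 1 ≤ m i) {A : Finset (Fin r)} {i : Fin r} (hi : i ∈ A)
    {u : Fin r → ℕ} (hu : ∀ j ∈ A, 1 ≤ u j) (hui : m i < u i)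
    (hum : ∀ j ∈ A, j ≠ i → u j ≤ m j) :
    μ[∑ k ∈ box A u, Z k | sigmaOfSums (partialSum Z) m] =ᵐ[μ] 0 := by
  rw [← insert_erase hi, sum_box_insert (notMem_erase i A) (hu i hi)]
  set u' := Function.update u i (u i - 1)
  have hinf : u' ⊓ m = u ⊓ m := by
    ext j
    rcases eq_or_ne j i with rfl | hji
    · simp only [Function.update_self, Pi.inf_apply, u']
      omega
    · simp [hji, u']
  have hu' : ∀ j ∈ A.erase i, u' j = u j := fun j hj =>
    Function.update_of_ne (ne_of_mem_erase hj) _ _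
  have hAu : ∀ j ∈ A.erase i, 1 ≤ u j := fun j hj => hu j (mem_of_mem_erase hj)
  have hAum : ∀ j ∈ A.erase i, u j ≤ m j := fun j hj =>
    hum j (mem_of_mem_erase hj) (ne_of_mem_erase hj)
  have hAu' : ∀ j ∈ A.erase i, 1 ≤ u' j := fun j hj => by rw [hu' j hj]; exact hAu j hj
  have hAum' : ∀ j ∈ A.erase i, u' j ≤ m j := fun j hj => by rw [hu' j hj]; exact hAum j hj
  filter_upwards [condExp_sub (integrable_sum_box hZ hAu) (integrable_sum_box hZ hAu')
      (sigmaOfSums (partialSum Z) m), condExp_sum_box hmart hZ hm _ hAu hAum,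
    condExp_sum_box hmart hZ hm _ hAu' hAum'] with ω h h₁ h₂
  rw [h, Pi.sub_apply, h₁, h₂, hinf, sub_self, Pi.zero_apply]

end RectangularMartingale

section Main

variable {r : ℕ} {Ω : Type*} [m0 : MeasurableSpace Ω] {μ : Measure Ω} [IsFiniteMeasure μ]
  {Z : (Fin r → ℕ) → Ω → ℝ} {α : ℝ}

theorem integral_abs_sum_box_compl_rpow_le (hα1 : 1 ≤ α) (hα2 : α ≤ 2)
    (hZmeas : ∀ n, Measurable (Z n))
    (hZ : ∀ n, (∀ i, 1 ≤ n i) → MemLp (Z n) (ENNReal.ofReal α) μ)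
    (hmart : IsRectangularMartingale Z μ) (C : Finset (Fin r)) {n : Fin r → ℕ}
    (hn : ∀ i, 1 ≤ n i) :
    ∫ ω, |∑ k ∈ box Cᶜ n, Z k ω| ^ α ∂μ ≤ 2 ^ #C * ∑ k ∈ box Cᶜ n, ∫ ω, |Z k ω| ^ α ∂μ := by
  induction C using Finset.induction_on generalizing n with
  | empty => simp [box_univ]
  | insert i C hi ih =>
    have hZint : ∀ n, (∀ i, 1 ≤ n i) → Integrable (Z n) μ := fun n hn =>
      (hZ n hn).integrable (by simpa using hα1)
    have hiC : i ∈ Cᶜ := by simpa using hi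
    rw [compl_insert]
    set D : ℕ → Ω → ℝ := fun s => ∑ k ∈ box Cᶜ (Function.update n i (s + 1)), Z k
    have hn' : ∀ s, ∀ j, 1 ≤ Function.update n i (s + 1) j := fun s =>
      one_le_update hn i (Nat.le_add_left 1 s)
    have hD : ∀ s, MemLp (D s) (ENNReal.ofReal α) μ := fun s =>
      memLp_finsetSum' _ fun k hk => hZ k (one_le_of_mem_box (fun j _ => hn' s j) hk)
    have hsum : ∀ t, μ[∑ s ∈ range (t + 1), D s | sigmaOfSums (partialSum Z)
        (Function.update n i (t + 1))] =ᵐ[μ] ∑ s ∈ range (t + 1), D s := fun t => by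
      have h := condExp_sum_box hmart hZint (hn' t) (Cᶜ.erase i) (fun j _ => hn' t j)
        fun j _ => le_rfl
      rwa [inf_idem, sum_box_erase_update_eq_sum_range hiC] at h
    have hcentred : ∀ t, μ[D (t + 1) | sigmaOfSums (partialSum Z)
        (Function.update n i (t + 1))] =ᵐ[μ] 0 := fun t =>
      condExp_sum_box_eq_zero hmart hZint (hn' t) hiC (fun j _ => hn' (t + 1) j) (by simp)
        fun j _ hji => by simp [hji]
    have hpointwise : ∀ ω, ∑ k ∈ box (Cᶜ.erase i) n, Z k ω = ∑ s ∈ range (n i), D s ω :=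
      fun ω => by
        simpa [D, Finset.sum_apply] using sum_box_erase_update_eq_sum_range hiC n (Z · ω) (n i)
    calc ∫ ω, |∑ k ∈ box (Cᶜ.erase i) n, Z k ω| ^ α ∂μ
        = ∫ ω, |∑ s ∈ range (n i), D s ω| ^ α ∂μ := by simp_rw [hpointwise]
      _ ≤ 2 * ∑ s ∈ range (n i), ∫ ω, |D s ω| ^ α ∂μ :=
        integral_abs_sum_range_rpow_le hα1 hα2
          (fun t => sigmaOfSums_partialSum_le hZmeas _) hD hsum hcentred (n i)
      _ ≤ 2 * ∑ s ∈ range (n i), 2 ^ #C *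
            ∑ k ∈ box Cᶜ (Function.update n i (s + 1)), ∫ ω, |Z k ω| ^ α ∂μ := by
        gcongr with s
        simpa [D, Finset.sum_apply] using ih (hn' s)
      _ = 2 ^ #(insert i C) * ∑ k ∈ box (Cᶜ.erase i) n, ∫ ω, |Z k ω| ^ α ∂μ := by
        rw [card_insert_of_notMem hi, pow_succ, ← mul_sum,
          ← sum_box_erase_update_eq_sum_range hiC, Function.update_eq_self]
        ring

end Main

end VonBahrEsseen

theorem von_bahr_esseen_multiparameter_general
    {r : ℕ} (α : ℝ) (hα1 : 1 < α) (hα2 : α ≤ 2)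
    {Ω : Type*} [MeasurableSpace Ω] {μ : Measure Ω} [IsProbabilityMeasure μ]
    (Z : (Fin r → ℕ) → Ω → ℝ)
    (hZmeas : ∀ n, Measurable (Z n))
    (hZα : ∀ n : Fin r → ℕ, (∀ i, 1 ≤ n i) → Integrable (fun ω => |Z n ω| ^ α) μ)
    (hmart : ∀ n m : Fin r → ℕ, (∀ i, 1 ≤ n i) → (∀ i, 1 ≤ m i) →
      μ[fun ω => ∑ k ∈ Finset.Icc 1 n, Z k ω |
          sigmaOfSums (fun j ω => ∑ k ∈ Finset.Icc 1 j, Z k ω) m]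
        =ᵐ[μ] fun ω => ∑ k ∈ Finset.Icc 1 (n ⊓ m), Z k ω)
    (N : Fin r → ℕ) (hN : ∀ i, 1 ≤ N i) :
    ∫ ω, |∑ k ∈ Finset.Icc 1 N, Z k ω| ^ α ∂μ ≤
      2 ^ r * ∑ k ∈ Finset.Icc (1 : Fin r → ℕ) N, ∫ ω, |Z k ω| ^ α ∂μ := by
  have hZ : ∀ n, (∀ i, 1 ≤ n i) → MemLp (Z n) (ENNReal.ofReal α) μ := fun n hn =>
    (integrable_norm_rpow_iff (hZmeas n).aestronglyMeasurable
      (ENNReal.ofReal_pos.2 (by linarith)).ne' ENNReal.ofReal_ne_top).1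
      (by simpa [ENNReal.toReal_ofReal (by linarith : 0 ≤ α)] using hZα n hn)
  simpa [VonBahrEsseen.box_empty] using
    VonBahrEsseen.integral_abs_sum_box_compl_rpow_le hα1.le hα2 hZmeas hZ hmart univ hN

/-- **Iterated von Bahr–Esseen inequality for multiparameter martingales.**
Let `α ∈ (1,2]` and let `{Z_n : n ∈ ℕ^r}` be a random field with `E|Z_n|^α < ∞` whose
rectangular partial sums `S_n = Σ_{k≤n} Z_k` form a multiparameter martingale, i.e.
`E[S_n | σ(S_k : k ≤ m)] = S_{n∧m}` a.s. for all `n, m`.  Then for every `N ∈ ℕ^r`,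
`E|S_N|^α ≤ 2^r Σ_{k≤N} E|Z_k|^α`. -/
theorem von_bahr_esseen_multiparameter
    {r : ℕ} (hr : 1 ≤ r) (α : ℝ) (hα1 : 1 < α) (hα2 : α ≤ 2)
    {Ω : Type*} [MeasurableSpace Ω] {μ : Measure Ω} [IsProbabilityMeasure μ]
    (Z : (Fin r → ℕ) → Ω → ℝ)
    (hZmeas : ∀ n, Measurable (Z n))
    (hZint : ∀ n : Fin r → ℕ, (∀ i, 1 ≤ n i) → Integrable (Z n) μ)
    (hZα : ∀ n : Fin r → ℕ, (∀ i, 1 ≤ n i) → Integrable (fun ω => |Z n ω| ^ α) μ)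
    (hmart : ∀ n m : Fin r → ℕ, (∀ i, 1 ≤ n i) → (∀ i, 1 ≤ m i) →
      μ[fun ω => ∑ k ∈ Finset.Icc 1 n, Z k ω |
          sigmaOfSums (fun j ω => ∑ k ∈ Finset.Icc 1 j, Z k ω) m]
        =ᵐ[μ] fun ω => ∑ k ∈ Finset.Icc 1 (n ⊓ m), Z k ω)
    (N : Fin r → ℕ) (hN : ∀ i, 1 ≤ N i) :
    ∫ ω, |∑ k ∈ Finset.Icc 1 N, Z k ω| ^ α ∂μ ≤
      2 ^ r * ∑ k ∈ Finset.Icc (1 : Fin r → ℕ) N, ∫ ω, |Z k ω| ^ α ∂μ :=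
  von_bahr_esseen_multiparameter_general α hα1 hα2 Z hZmeas hZα hmart N hN
end

section
/- (Kronecker lemma for multiple sums, min-convergence.) Let r ≥ 1 be an integer, {x_n : n ∈ ℕ^r} nonnegative real numbers, and b = {b_n : n ∈ ℕ^r} a monotonic array of positive reals with b_n → ∞ as n → ∞ (i.e., as min(n_1,…,n_r) → ∞). If the multiple series Σ_{n∈ℕ^r} x_n/b_n converges (i.e., its rectangular partial sums Σ_{k≤n} x_k/b_k have a finite limit as min(n_1,…,n_r) → ∞), then (1/b_n) Σ_{k≤n} x_k → 0 as n → ∞ (i.e., as min(n_1,…,n_r) → ∞). -/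
/-!
Write `S n = ∑_{k ≤ n} x_k / b_k`. Since the terms are nonnegative, `S` is monotone and bounded
by its limit `L`. Split `∑_{k ≤ n} x_k` at a fixed corner `N` with `S N > L - ε / 2`: the head is a
constant, so divided by `b_n → ∞` it vanishes, while on the tail `b_k ≤ b_n` by monotonicity, so the
tail divided by `b_n` is at most `S n - S N ≤ L - S N < ε / 2`.
-/

open Filter Finset Topology

theorem sum_le_mul_sum_div {α : Type*} {s : Finset α} {x b : α → ℝ} {B : ℝ}
    (hx : ∀ k ∈ s, 0 ≤ x k) (hb : ∀ k ∈ s, 0 < b k) (hbB : ∀ k ∈ s, b k ≤ B) :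
    ∑ k ∈ s, x k ≤ B * ∑ k ∈ s, x k / b k := by
  rw [mul_sum]
  refine sum_le_sum fun k hk => ?_
  calc x k = x k / b k * b k := (div_mul_cancel₀ _ (hb k hk).ne').symm
    _ ≤ x k / b k * B := by gcongr; exacts [div_nonneg (hx k hk) (hb k hk).le, hbB k hk]
    _ = B * (x k / b k) := mul_comm _ _

section Kronecker

variable {ι : Type*} [Preorder ι] [LocallyFiniteOrder ι] {a : ι} {x b : ι → ℝ}

theorem monotone_sum_Icc (hx : ∀ k, a ≤ k → 0 ≤ x k) :
    Monotone fun n => ∑ k ∈ Icc a n, x k :=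
  fun _ _ hmn => sum_le_sum_of_subset_of_nonneg (Icc_subset_Icc_right hmn)
    fun k hk _ => hx k (mem_Icc.1 hk).1

theorem sum_Icc_le_add_mul_sub (hx : ∀ k, a ≤ k → 0 ≤ x k) (hbpos : ∀ k, a ≤ k → 0 < b k)
    (hbmono : ∀ k n, a ≤ k → k ≤ n → b k ≤ b n) {N n : ι} (hNn : N ≤ n) :
    ∑ k ∈ Icc a n, x k ≤ ∑ k ∈ Icc a N, x k +
      b n * (∑ k ∈ Icc a n, x k / b k - ∑ k ∈ Icc a N, x k / b k) := by
  classical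
  have hsub : Icc a N ⊆ Icc a n := Icc_subset_Icc_right hNn
  rw [← sum_sdiff hsub, add_comm, ← sum_sdiff_eq_sub hsub]
  gcongr
  refine sum_le_mul_sum_div (fun k hk => ?_) (fun k hk => ?_) (fun k hk => ?_) <;>
    obtain ⟨hak, hkn⟩ := mem_Icc.1 (mem_sdiff.1 hk).1
  exacts [hx k hak, hbpos k hak, hbmono k n hak hkn]

theorem tendsto_sum_Icc_div_zero [Nonempty ι] [IsDirected ι (· ≤ ·)]
    (hx : ∀ k, a ≤ k → 0 ≤ x k) (hbpos : ∀ k, a ≤ k → 0 < b k)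
    (hbmono : ∀ k n, a ≤ k → k ≤ n → b k ≤ b n) (hbinf : Tendsto b atTop atTop) {L : ℝ}
    (hL : Tendsto (fun n => ∑ k ∈ Icc a n, x k / b k) atTop (𝓝 L)) :
    Tendsto (fun n => (∑ k ∈ Icc a n, x k) / b n) atTop (𝓝 0) := by
  have hterm : ∀ k, a ≤ k → 0 ≤ x k / b k := fun k hk => div_nonneg (hx k hk) (hbpos k hk).le
  have hSL : ∀ n, ∑ k ∈ Icc a n, x k / b k ≤ L := (monotone_sum_Icc hterm).ge_of_tendsto hL
  refine tendsto_order.2 ⟨fun c hc => ?_, fun ε hε => ?_⟩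
  · filter_upwards [hbinf.eventually_gt_atTop 0] with n hbn
    exact hc.trans_le <| div_nonneg (sum_nonneg fun k hk => hx k (mem_Icc.1 hk).1) hbn.le
  obtain ⟨N, hN⟩ := (hL.eventually (lt_mem_nhds (sub_lt_self L (half_pos hε)))).exists
  have hhead : Tendsto (fun n => (∑ k ∈ Icc a N, x k) / b n) atTop (𝓝 0) :=
    tendsto_const_nhds.div_atTop hbinf
  filter_upwards [eventually_ge_atTop N, hbinf.eventually_gt_atTop 0,
    hhead.eventually (gt_mem_nhds (half_pos hε))] with n hNn hbn hheadn
  calc (∑ k ∈ Icc a n, x k) / b n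
      ≤ (∑ k ∈ Icc a N, x k +
          b n * (∑ k ∈ Icc a n, x k / b k - ∑ k ∈ Icc a N, x k / b k)) / b n := by
        gcongr; exact sum_Icc_le_add_mul_sub hx hbpos hbmono hNn
    _ = (∑ k ∈ Icc a N, x k) / b n +
          (∑ k ∈ Icc a n, x k / b k - ∑ k ∈ Icc a N, x k / b k) := by
        rw [add_div, mul_div_cancel_left₀ _ hbn.ne']
    _ < ε / 2 + ε / 2 := by gcongr; linarith [hSL n]
    _ = ε := add_halves ε

end Kronecker

theorem kronecker_multiple_min_general
    {r : ℕ}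
    (x : (Fin r → ℕ) → ℝ)
    (hx : ∀ n : Fin r → ℕ, (∀ i, 1 ≤ n i) → 0 ≤ x n)
    (b : (Fin r → ℕ) → ℝ)
    (hbpos : ∀ n : Fin r → ℕ, (∀ i, 1 ≤ n i) → 0 < b n)
    (hbmono : ∀ k n : Fin r → ℕ, (∀ i, 1 ≤ k i) → k ≤ n → b k ≤ b n)
    (hbinf : Filter.Tendsto b Filter.atTop Filter.atTop)
    (hconv : ∃ L : ℝ, Filter.Tendsto
      (fun n : Fin r → ℕ => ∑ k ∈ Finset.Icc 1 n, x k / b k)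
      Filter.atTop (nhds L)) :
    Filter.Tendsto (fun n : Fin r → ℕ => (∑ k ∈ Finset.Icc 1 n, x k) / b n)
      Filter.atTop (nhds 0) := by
  obtain ⟨L, hL⟩ := hconv
  exact tendsto_sum_Icc_div_zero hx hbpos hbmono hbinf hL

/-- **Kronecker lemma for multiple sums (min-convergence).**
Let `{x_n : n ∈ ℕ^r}` be nonnegative reals and `b` a monotonic array of positive reals
with `b_n → ∞` as `n → ∞` (i.e. as `min(n₁,…,n_r) → ∞`).  If the rectangular partial
sums of `Σ_n x_n/b_n` converge as `min(n₁,…,n_r) → ∞`, then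
`(1/b_n) Σ_{k≤n} x_k → 0` as `min(n₁,…,n_r) → ∞`. -/
theorem kronecker_multiple_min
    {r : ℕ} (hr : 1 ≤ r)
    (x : (Fin r → ℕ) → ℝ)
    (hx : ∀ n : Fin r → ℕ, (∀ i, 1 ≤ n i) → 0 ≤ x n)
    (b : (Fin r → ℕ) → ℝ)
    (hbpos : ∀ n : Fin r → ℕ, (∀ i, 1 ≤ n i) → 0 < b n)
    (hbmono : ∀ k n : Fin r → ℕ, (∀ i, 1 ≤ k i) → k ≤ n → b k ≤ b n)
    (hbinf : Filter.Tendsto b Filter.atTop Filter.atTop)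
    (hconv : ∃ L : ℝ, Filter.Tendsto
      (fun n : Fin r → ℕ => ∑ k ∈ Finset.Icc 1 n, x k / b k)
      Filter.atTop (nhds L)) :
    Filter.Tendsto (fun n : Fin r → ℕ => (∑ k ∈ Finset.Icc 1 n, x k) / b n)
      Filter.atTop (nhds 0) :=
  kronecker_multiple_min_general x hx b hbpos hbmono hbinf hconv
end

section
/- (Kronecker lemma for multiple sums, max-convergence.) Let r ≥ 1 be an integer, {x_n : n ∈ ℕ^r} nonnegative real numbers, and b = {b_n : n ∈ ℕ^r} a monotonic array of positive reals with b_n → ∞ as |n| → ∞ (i.e., for every M > 0 there exists N such that b_n ≥ M whenever |n| = n_1⋯n_r ≥ N). If the multiple series Σ_{n∈ℕ^r} x_n/b_n converges (i.e., its rectangular partial sums Σ_{k≤n} x_k/b_k have a finite limit as min(n_1,…,n_r) → ∞; since the terms are nonnegative, equivalently the unordered sum is finite), then (1/b_n) Σ_{k≤n} x_k → 0 as |n| → ∞ (convergence along the net of multi-indices directed by |n| → ∞). -/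
/-!
Fix `m` so that the tail of the convergent series `∑ x_k / b_k` beyond the box `[1, m]` is
below `ε`. For `k ≤ n` monotonicity gives `x_k ≤ b_n · x_k / b_k`, so the sum of `x_k` over
`[1, n] \ [1, m]` is at most `ε b_n`, while the sum over `[1, n] ∩ [1, m]` is bounded by a
constant `C`. Hence `(∑_{k ≤ n} x_k) / b_n ≤ C / b_n + ε`, and `b_n → ∞` finishes the proof.
-/

open Filter Finset

/-- The filter on multi-indices `n ∈ ℕ^r` corresponding to `|n| = n₁⋯n_r → ∞`
(max-convergence). -/
def maxFilter (r : ℕ) : Filter (Fin r → ℕ) :=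
  Filter.atTop.comap (fun n => ∏ i, n i)

open Topology

section Kronecker

variable {ι : Type*} [Preorder ι] [IsDirectedOrder ι] [LocallyFiniteOrder ι] {a : ι}
  {x b : ι → ℝ}

theorem exists_sum_Icc_le_add_mul (hx : ∀ k, a ≤ k → 0 ≤ x k) (hb : ∀ k, a ≤ k → 0 < b k)
    (hbmono : ∀ k n, a ≤ k → k ≤ n → b k ≤ b n) {L : ℝ}
    (hL : Tendsto (fun n => ∑ k ∈ Icc a n, x k / b k) atTop (𝓝 L)) {ε : ℝ} (hε : 0 < ε) :
    ∃ C, ∀ n, a ≤ n → ∑ k ∈ Icc a n, x k ≤ C + ε * b n := by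
  classical
  have : Nonempty ι := ⟨a⟩
  set S := fun n => ∑ k ∈ Icc a n, x k / b k
  have hterm : ∀ k, a ≤ k → 0 ≤ x k / b k := fun k hk => div_nonneg (hx k hk) (hb k hk).le
  have hS : Monotone S := fun n p hnp =>
    sum_le_sum_of_subset_of_nonneg (Icc_subset_Icc_right hnp) fun k hk _ =>
      hterm k (mem_Icc.1 hk).1
  obtain ⟨m, hm⟩ : ∃ m, L - ε < S m :=
    (hL.eventually (eventually_gt_nhds (sub_lt_self L hε))).exists
  refine ⟨∑ k ∈ Icc a m, x k, fun n han => ?_⟩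
  have head : ∑ k ∈ Icc a n ∩ Icc a m, x k ≤ ∑ k ∈ Icc a m, x k :=
    sum_le_sum_of_subset_of_nonneg inter_subset_right fun k hk _ => hx k (mem_Icc.1 hk).1
  obtain ⟨p, hnp, hmp⟩ := exists_ge_ge n m
  have tail_div : ∑ k ∈ Icc a n \ Icc a m, x k / b k ≤ ε :=
    calc ∑ k ∈ Icc a n \ Icc a m, x k / b k
        ≤ ∑ k ∈ Icc a p \ Icc a m, x k / b k :=
          sum_le_sum_of_subset_of_nonneg (sdiff_subset_sdiff (Icc_subset_Icc_right hnp) le_rfl)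
            fun k hk _ => hterm k (mem_Icc.1 (mem_sdiff.1 hk).1).1
      _ = S p - S m := sum_sdiff_eq_sub (Icc_subset_Icc_right hmp)
      _ ≤ ε := by linarith [hS.ge_of_tendsto hL p]
  have tail : ∑ k ∈ Icc a n \ Icc a m, x k ≤ ε * b n :=
    calc ∑ k ∈ Icc a n \ Icc a m, x k
        ≤ ∑ k ∈ Icc a n \ Icc a m, b n * (x k / b k) := by
          refine sum_le_sum fun k hk => ?_
          obtain ⟨hak, hkn⟩ := mem_Icc.1 (mem_sdiff.1 hk).1
          calc x k = b k * (x k / b k) := (mul_div_cancel₀ _ (hb k hak).ne').symm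
            _ ≤ b n * (x k / b k) :=
              mul_le_mul_of_nonneg_right (hbmono k n hak hkn) (hterm k hak)
      _ = b n * ∑ k ∈ Icc a n \ Icc a m, x k / b k := (mul_sum _ _ _).symm
      _ ≤ b n * ε := mul_le_mul_of_nonneg_left tail_div (hb n han).le
      _ = ε * b n := mul_comm _ _
  rw [← sum_inter_add_sum_sdiff (Icc a n) (Icc a m) x]
  linarith

end Kronecker

theorem tendsto_div_nhds_zero_of_le_add_mul {α : Type*} {F : Filter α} {T b : α → ℝ}
    (hT : ∀ᶠ n in F, 0 ≤ T n) (hb : Tendsto b F atTop)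
    (hTb : ∀ ε > 0, ∃ C, ∀ᶠ n in F, T n ≤ C + ε * b n) :
    Tendsto (fun n => T n / b n) F (𝓝 0) := by
  have hbpos : ∀ᶠ n in F, 0 < b n := hb.eventually_gt_atTop 0
  refine tendsto_order.2 ⟨fun δ hδ => ?_, fun δ hδ => ?_⟩
  · filter_upwards [hT, hbpos] with n hTn hbn
    exact hδ.trans_le (div_nonneg hTn hbn.le)
  · obtain ⟨C, hC⟩ := hTb (δ / 2) (half_pos hδ)
    have hCb : ∀ᶠ n in F, C / b n < δ / 2 :=
      (tendsto_const_nhds.div_atTop hb).eventually (eventually_lt_nhds (half_pos hδ))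
    filter_upwards [hC, hCb, hbpos] with n hTn hCn hbn
    calc T n / b n ≤ (C + δ / 2 * b n) / b n := div_le_div_of_nonneg_right hTn hbn.le
      _ = C / b n + δ / 2 := by field_simp
      _ < δ := by linarith

theorem eventually_one_le_maxFilter (r : ℕ) : ∀ᶠ n in maxFilter r, 1 ≤ n := by
  filter_upwards [(tendsto_comap : Tendsto _ (maxFilter r) atTop).eventually_ge_atTop 1]
    with n hn i
  exact Nat.one_le_iff_ne_zero.2 <|
    prod_ne_zero_iff.1 (Nat.one_le_iff_ne_zero.1 hn) i (mem_univ i)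

theorem kronecker_multiple_max_general
    {r : ℕ}
    (x : (Fin r → ℕ) → ℝ)
    (hx : ∀ n : Fin r → ℕ, (∀ i, 1 ≤ n i) → 0 ≤ x n)
    (b : (Fin r → ℕ) → ℝ)
    (hbpos : ∀ n : Fin r → ℕ, (∀ i, 1 ≤ n i) → 0 < b n)
    (hbmono : ∀ k n : Fin r → ℕ, (∀ i, 1 ≤ k i) → k ≤ n → b k ≤ b n)
    (hbinf : Filter.Tendsto b (maxFilter r) Filter.atTop)
    (hconv : ∃ L : ℝ, Filter.Tendsto
      (fun n : Fin r → ℕ => ∑ k ∈ Finset.Icc 1 n, x k / b k)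
      Filter.atTop (nhds L)) :
    Filter.Tendsto (fun n : Fin r → ℕ => (∑ k ∈ Finset.Icc 1 n, x k) / b n)
      (maxFilter r) (nhds 0) := by
  obtain ⟨L, hL⟩ := hconv
  refine tendsto_div_nhds_zero_of_le_add_mul
    (Eventually.of_forall fun n => sum_nonneg fun k hk => hx k (mem_Icc.1 hk).1) hbinf
    fun ε hε => ?_
  obtain ⟨C, hC⟩ := exists_sum_Icc_le_add_mul hx hbpos hbmono hL hε
  exact ⟨C, (eventually_one_le_maxFilter r).mono hC⟩

/-- **Kronecker lemma for multiple sums (max-convergence).**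
Let `{x_n : n ∈ ℕ^r}` be nonnegative reals and `b` a monotonic array of positive reals
with `b_n → ∞` as `|n| = n₁⋯n_r → ∞`.  If the rectangular partial sums of
`Σ_n x_n/b_n` converge as `min(n₁,…,n_r) → ∞`, then `(1/b_n) Σ_{k≤n} x_k → 0` as
`|n| → ∞`. -/
theorem kronecker_multiple_max
    {r : ℕ} (hr : 1 ≤ r)
    (x : (Fin r → ℕ) → ℝ)
    (hx : ∀ n : Fin r → ℕ, (∀ i, 1 ≤ n i) → 0 ≤ x n)
    (b : (Fin r → ℕ) → ℝ)
    (hbpos : ∀ n : Fin r → ℕ, (∀ i, 1 ≤ n i) → 0 < b n)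
    (hbmono : ∀ k n : Fin r → ℕ, (∀ i, 1 ≤ k i) → k ≤ n → b k ≤ b n)
    (hbinf : Filter.Tendsto b (maxFilter r) Filter.atTop)
    (hconv : ∃ L : ℝ, Filter.Tendsto
      (fun n : Fin r → ℕ => ∑ k ∈ Finset.Icc 1 n, x k / b k)
      Filter.atTop (nhds L)) :
    Filter.Tendsto (fun n : Fin r → ℕ => (∑ k ∈ Finset.Icc 1 n, x k) / b n)
      (maxFilter r) (nhds 0) :=
  kronecker_multiple_max_general x hx b hbpos hbmono hbinf hconv
end

section
/- (Failure of the Kronecker lemma for multiple sums without nonnegativity.) Let r = 2 and define b_{(n_1,n_2)} = n_1 n_2 for (n_1,n_2) ∈ ℕ², and x_{(k_1,k_2)} = −k_2 if k_1 = 1, x_{(k_1,k_2)} = 2k_2 if k_1 = 2, and x_{(k_1,k_2)} = 0 if k_1 > 2. Then: (i) for all n_1 ≥ 2 and n_2 ≥ 1, Σ_{k_1=1}^{n_1} Σ_{k_2=1}^{n_2} x_{(k_1,k_2)}/b_{(k_1,k_2)} = 0, so the double series Σ x_{(k_1,k_2)}/b_{(k_1,k_2)} converges to 0 (its rectangular partial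 sums are eventually constant equal to 0); (ii) for all n_1 ≥ 2 and n_2 ≥ 1, (1/b_{(n_1,n_2)}) Σ_{k_1=1}^{n_1} Σ_{k_2=1}^{n_2} x_{(k_1,k_2)} = (n_2+1)/(2n_1); and consequently (iii) the normalized partial sums (1/b_n) Σ_{k≤n} x_k do not converge as n → ∞ (i.e., along the net directed by min(n_1,n_2) → ∞). -/
/-!
Only the columns `k₁ = 1, 2` carry nonzero terms, and in row `k₂` they are `-k₂` and `2k₂`.
Weighted by `1 / b`, they become `-1` and `1` and cancel, whereas their plain sum is `k₂`.
So `Σ x / b` vanishes while `Σ x = n₂(n₂+1)/2`, and the normalized sums `(n₂+1)/(2n₁)`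
tend to `a / 2` along each ray `n₂ = a n₁`; different rays give different limits.
-/

open Filter Finset Topology

theorem sum_Icc_one_eq_add_of_ge_three {M : Type*} [AddCommMonoid M] {f : ℕ → M} {n : ℕ}
    (hn : 2 ≤ n) (hf : ∀ k, 3 ≤ k → f k = 0) :
    ∑ k ∈ Icc 1 n, f k = f 1 + f 2 := by
  have hsub : ({1, 2} : Finset ℕ) ⊆ Icc 1 n := by
    intro k hk
    simp only [mem_insert, mem_singleton] at hk
    simp only [mem_Icc]
    omega
  rw [← sum_subset hsub fun k hk hk12 => hf k ?_, sum_pair (by norm_num)]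
  simp only [mem_Icc, mem_insert, mem_singleton] at hk hk12
  omega

theorem sum_Icc_sum_Icc_eq_sum_add_of_ge_three {M : Type*} [AddCommMonoid M]
    {g : ℕ × ℕ → M} {n₁ : ℕ} (n₂ : ℕ) (hn₁ : 2 ≤ n₁) (hg : ∀ k, 3 ≤ k.1 → g k = 0) :
    ∑ k₁ ∈ Icc 1 n₁, ∑ k₂ ∈ Icc 1 n₂, g (k₁, k₂) = ∑ k₂ ∈ Icc 1 n₂, (g (1, k₂) + g (2, k₂)) := by
  rw [sum_Icc_one_eq_add_of_ge_three hn₁ fun k hk => sum_eq_zero fun j _ => hg (k, j) hk,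
    sum_add_distrib]

theorem sum_Icc_one_natCast (n : ℕ) : ∑ k ∈ Icc 1 n, (k : ℝ) = n * (n + 1) / 2 := by
  induction n with
  | zero => simp
  | succ m ih =>
    rw [sum_Icc_succ_top (by omega), ih]
    push_cast
    ring

theorem tendsto_natCast_add_one_div_two_mul (a : ℕ) :
    Tendsto (fun m : ℕ => ((a * m : ℝ) + 1) / (2 * m)) atTop (𝓝 (a / 2)) := by
  have h : Tendsto (fun m : ℕ => (a / 2 : ℝ) + 2⁻¹ * (m : ℝ)⁻¹) atTop (𝓝 (a / 2 + 2⁻¹ * 0)) :=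
    tendsto_const_nhds.add
      ((tendsto_inv_atTop_zero.comp tendsto_natCast_atTop_atTop).const_mul _)
  rw [mul_zero, add_zero] at h
  refine h.congr' ?_
  filter_upwards [eventually_ge_atTop 1] with m hm
  have : (m : ℝ) ≠ 0 := by positivity
  field_simp

theorem not_tendsto_add_one_div_two_mul :
    ¬ ∃ L : ℝ, Tendsto (fun n : ℕ × ℕ => ((n.2 : ℝ) + 1) / (2 * n.1)) atTop (𝓝 L) := by
  rintro ⟨L, hL⟩
  have hray : ∀ a : ℕ, 1 ≤ a → L = a / 2 := fun a ha => by
    have hpath : Tendsto (fun m : ℕ => (m, a * m)) atTop atTop := by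
      rw [← prod_atTop_atTop_eq]
      exact tendsto_id.prodMk (tendsto_id.const_mul_atTop' ha)
    refine tendsto_nhds_unique ?_ (tendsto_natCast_add_one_div_two_mul a)
    simpa [Function.comp_def] using hL.comp hpath
  have h1 := hray 1 le_rfl
  have h2 := hray 2 one_le_two
  norm_num [h1] at h2

def kroneckerTerm (k : ℕ × ℕ) : ℝ :=
  if k.1 = 1 then -(k.2 : ℝ) else if k.1 = 2 then 2 * (k.2 : ℝ) else 0

theorem kroneckerTerm_of_three_le {k : ℕ × ℕ} (hk : 3 ≤ k.1) : kroneckerTerm k = 0 := by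
  rw [kroneckerTerm, if_neg (by omega), if_neg (by omega)]

theorem kroneckerTerm_one_add_two (j : ℕ) :
    kroneckerTerm (1, j) + kroneckerTerm (2, j) = j := by
  norm_num [kroneckerTerm]
  ring

theorem kroneckerTerm_div_one_add_two (j : ℕ) :
    kroneckerTerm (1, j) / (1 * j) + kroneckerTerm (2, j) / (2 * j) = 0 := by
  rcases eq_or_ne (j : ℝ) 0 with hj | hj
  · simp [hj]
  · norm_num [kroneckerTerm]
    field_simp
    ring

/-- **Failure of the Kronecker lemma for multiple sums without nonnegativity.**
For `r = 2`, `b_{(n₁,n₂)} = n₁n₂` and `x_{(k₁,k₂)} = −k₂` if `k₁ = 1`, `2k₂` if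
`k₁ = 2`, `0` if `k₁ > 2`:  (i) all rectangular partial sums of `Σ x/b` with `n₁ ≥ 2`
vanish, so the double series converges to `0`;  (ii) the normalized partial sums equal
`(n₂+1)/(2n₁)` for `n₁ ≥ 2`;  (iii) consequently they do not converge along the net
directed by `min(n₁,n₂) → ∞`. -/
theorem kronecker_counterexample
    (b : ℕ × ℕ → ℝ) (hb : ∀ n : ℕ × ℕ, b n = (n.1 : ℝ) * n.2)
    (x : ℕ × ℕ → ℝ)
    (hx : ∀ k : ℕ × ℕ, x k =
      if k.1 = 1 then -(k.2 : ℝ) else if k.1 = 2 then 2 * (k.2 : ℝ) else 0) :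
    (∀ n₁ n₂ : ℕ, 2 ≤ n₁ → 1 ≤ n₂ →
      ∑ k₁ ∈ Finset.Icc 1 n₁, ∑ k₂ ∈ Finset.Icc 1 n₂, x (k₁, k₂) / b (k₁, k₂) = 0) ∧
    (∀ n₁ n₂ : ℕ, 2 ≤ n₁ → 1 ≤ n₂ →
      (∑ k₁ ∈ Finset.Icc 1 n₁, ∑ k₂ ∈ Finset.Icc 1 n₂, x (k₁, k₂)) / b (n₁, n₂) =
        ((n₂ : ℝ) + 1) / (2 * n₁)) ∧
    ¬ ∃ L : ℝ, Filter.Tendsto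
      (fun n : ℕ × ℕ =>
        (∑ k₁ ∈ Finset.Icc 1 n.1, ∑ k₂ ∈ Finset.Icc 1 n.2, x (k₁, k₂)) / b n)
      Filter.atTop (nhds L) := by
  obtain rfl : x = kroneckerTerm := funext hx
  obtain rfl : b = fun n => (n.1 : ℝ) * n.2 := funext hb
  have hsum (n₁ n₂ : ℕ) (hn₁ : 2 ≤ n₁) :
      ∑ k₁ ∈ Icc 1 n₁, ∑ k₂ ∈ Icc 1 n₂, kroneckerTerm (k₁, k₂) = n₂ * (n₂ + 1) / 2 := by
    rw [sum_Icc_sum_Icc_eq_sum_add_of_ge_three n₂ hn₁ fun k => kroneckerTerm_of_three_le]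
    simp only [kroneckerTerm_one_add_two, sum_Icc_one_natCast]
  have hnormalized (n₁ n₂ : ℕ) (hn₁ : 2 ≤ n₁) (hn₂ : 1 ≤ n₂) :
      (∑ k₁ ∈ Icc 1 n₁, ∑ k₂ ∈ Icc 1 n₂, kroneckerTerm (k₁, k₂)) / (n₁ * n₂) =
        ((n₂ : ℝ) + 1) / (2 * n₁) := by
    rw [hsum n₁ n₂ hn₁]
    field_simp
  refine ⟨fun n₁ n₂ hn₁ _ => ?_, hnormalized, fun ⟨L, hL⟩ => ?_⟩
  · beta_reduce
    rw [sum_Icc_sum_Icc_eq_sum_add_of_ge_three (g := fun k => kroneckerTerm k / (k.1 * k.2)) n₂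
      hn₁ fun k hk => by rw [kroneckerTerm_of_three_le hk, zero_div]]
    simp only [Nat.cast_one, Nat.cast_ofNat, kroneckerTerm_div_one_add_two, sum_const_zero]
  · refine not_tendsto_add_one_div_two_mul ⟨L, hL.congr' ?_⟩
    filter_upwards [eventually_ge_atTop (2, 1)] with n hn
    exact hnormalized n.1 n.2 hn.1 hn.2
end
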